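/- arXiv:1302.0546 — 5 statements merged into one kernel-verified Lean document; each statement's English description precedes it below -/
import Mathlib

section
/- The unit circle 𝕋 = {z : |z| = 1} is a spectral set for a bounded operator A on a complex Hilbert space if and only if A is unitary. -/
/-- `X` is a spectral set for a bounded operator `A` on a Hilbert space. -/
def IsSpectralSet {H : Type*} [NormedAddCommGroup H] [InnerProductSpace ℂ H]
    [CompleteSpace H] (A : H →L[ℂ] H) (X : Set ℂ) : Prop :=
  spectrum ℂ A ⊆ X ∧
    ∀ (p q : Polynomial ℂ) (C : ℝ),
      (∀ z ∈ X, q.eval z ≠ 0) →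
      (∀ z ∈ X, ‖p.eval z / q.eval z‖ ≤ C) →
      ‖Polynomial.aeval A p * Ring.inverse (Polynomial.aeval A q)‖ ≤ C

/-!
If the unit circle is spectral for `A`, the rational functions `z` and `1 / z` give `‖A‖ ≤ 1`
and `‖A⁻¹‖ ≤ 1` (`A` is invertible as `0 ∉ σ(A)`), so `A` is an invertible isometry, i.e. unitary.
Conversely a unitary is normal with spectrum on the circle, and for a normal operator
`p(A) q(A)⁻¹` is the continuous functional calculus of `p / q`, whose norm is the supremum of
`|p / q|` over the spectrum (von Neumann).
-/

open Polynomial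

section RationalFunctionalCalculus

variable {A : Type*} [CStarAlgebra A]

lemma aeval_mul_inverse_aeval_eq_cfc (a : A) [IsStarNormal a] {p q : ℂ[X]}
    (hq : ∀ z ∈ spectrum ℂ a, q.eval z ≠ 0) :
    aeval a p * Ring.inverse (aeval a q) = cfc (fun z ↦ p.eval z / q.eval z) a := by
  have hq_unit : IsUnit (aeval a q) := by
    rw [← cfc_polynomial q a]
    exact (isUnit_cfc_iff _ a).mpr hq
  have hcont : ContinuousOn (fun z ↦ p.eval z / q.eval z) (spectrum ℂ a) :=
    p.continuous.continuousOn.div q.continuous.continuousOn hq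
  have hmul : cfc (fun z ↦ p.eval z / q.eval z) a * aeval a q = aeval a p := by
    rw [← cfc_polynomial q a, ← cfc_mul _ _ a, ← cfc_polynomial p a]
    exact cfc_congr fun z hz ↦ div_mul_cancel₀ _ (hq z hz)
  rw [← hmul, mul_assoc, Ring.mul_inverse_cancel _ hq_unit, mul_one]

end RationalFunctionalCalculus

lemma ContinuousLinearMap.norm_map_of_norm_le_one_of_norm_inverse_le_one {𝕜 E : Type*}
    [NontriviallyNormedField 𝕜] [NormedAddCommGroup E] [NormedSpace 𝕜 E] {T : E →L[𝕜] E}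
    (hT : IsUnit T) (hT_norm : ‖T‖ ≤ 1) (hT_inv : ‖Ring.inverse T‖ ≤ 1) (x : E) :
    ‖T x‖ = ‖x‖ := by
  refine le_antisymm ((T.le_of_opNorm_le hT_norm x).trans_eq (one_mul _)) ?_
  calc ‖x‖ = ‖Ring.inverse T (T x)‖ := by
        rw [← mul_apply_eq_comp, Ring.inverse_mul_cancel T hT, one_apply_eq_self]
    _ ≤ ‖T x‖ := ((Ring.inverse T).le_of_opNorm_le hT_inv _).trans_eq (one_mul _)

lemma ContinuousLinearMap.mem_unitary_of_norm_le_one_of_norm_inverse_le_one {𝕜 H : Type*}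
    [RCLike 𝕜] [NormedAddCommGroup H] [InnerProductSpace 𝕜 H] [CompleteSpace H] {T : H →L[𝕜] H}
    (hT : IsUnit T) (hT_norm : ‖T‖ ≤ 1) (hT_inv : ‖Ring.inverse T‖ ≤ 1) :
    T ∈ unitary (H →L[𝕜] H) :=
  hT.mem_unitary_of_star_mul_self <| (norm_map_iff_adjoint_comp_self T).mp
    (norm_map_of_norm_le_one_of_norm_inverse_le_one hT hT_norm hT_inv)

namespace IsSpectralSet

variable {H : Type*} [NormedAddCommGroup H] [InnerProductSpace ℂ H] [CompleteSpace H]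
  {A : H →L[ℂ] H} {S : Set ℂ}

lemma of_isStarNormal [IsStarNormal A] (hS : S.Nonempty) (hσ : spectrum ℂ A ⊆ S) :
    IsSpectralSet A S := by
  refine ⟨hσ, fun p q C hq hpq ↦ ?_⟩
  obtain ⟨z₀, hz₀⟩ := hS
  rw [aeval_mul_inverse_aeval_eq_cfc A fun z hz ↦ hq z (hσ hz)]
  exact norm_cfc_le ((norm_nonneg _).trans (hpq z₀ hz₀)) fun z hz ↦ hpq z (hσ hz)

lemma mem_unitary_of_unit_circle (h : IsSpectralSet A {z : ℂ | ‖z‖ = 1}) :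
    A ∈ unitary (H →L[ℂ] H) := by
  have hA_unit : IsUnit A :=
    spectrum.isUnit_of_zero_notMem ℂ fun h0 ↦ by simpa using h.1 h0
  have hA_norm : ‖A‖ ≤ 1 := by
    simpa using h.2 X 1 1 (by simp) fun z hz ↦ by simpa using hz.le
  have hA_inv : ‖Ring.inverse A‖ ≤ 1 := by
    have := h.2 1 X 1 (fun z hz hz0 ↦ by simp_all) fun z hz ↦ by simp_all
    simpa using this
  exact ContinuousLinearMap.mem_unitary_of_norm_le_one_of_norm_inverse_le_one
    hA_unit hA_norm hA_inv

end IsSpectralSet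

/-- The unit circle is a spectral set for `A` if and only if `A` is unitary. -/
theorem unit_circle_spectral_iff_unitary {H : Type*} [NormedAddCommGroup H]
    [InnerProductSpace ℂ H] [CompleteSpace H] (A : H →L[ℂ] H) :
    IsSpectralSet A {z : ℂ | ‖z‖ = 1} ↔ (A * ContinuousLinearMap.adjoint A = 1 ∧ ContinuousLinearMap.adjoint A * A = 1) := by
  rw [← ContinuousLinearMap.star_eq_adjoint, and_comm, ← Unitary.mem_iff]
  refine ⟨IsSpectralSet.mem_unitary_of_unit_circle, fun hA ↦ ?_⟩
  have := isStarNormal_of_mem_unitary hA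
  exact .of_isStarNormal ⟨1, by simp⟩ fun z hz ↦ spectrum.norm_eq_one_of_unitary hA hz
end

section
/- The von Neumann inequality fails for the Hölder 1-norm on ℂ²: for A = [[0,1],[1,0]] and the Möbius function f(z) = (z+a)/(1+ā z) with a = i/2, one has ‖A‖₁ = 1, sup_{|z|≤1}|f(z)| = 1, f(A) = [[4i/5, 3/5],[3/5, 4i/5]], and ‖f(A)‖₁ = 7/5 > 1. -/
open Complex Matrix

/-- The matrix norm on `ℂ^{2×2}` subordinate to the vector 1-norm
(maximum absolute column sum). -/
noncomputable def norm1 (M : Matrix (Fin 2) (Fin 2) ℂ) : ℝ :=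
  max (‖M 0 0‖ + ‖M 1 0‖)
      (‖M 0 1‖ + ‖M 1 1‖)

/-- The von Neumann inequality fails for the Hölder 1-norm on `ℂ²`: for
`A = [[0,1],[1,0]]` and the Blaschke factor `f(z) = (z+a)/(1+ā z)` with `a = i/2`, one has
`‖A‖₁ = 1`, `sup_{|z|≤1} |f(z)| = 1`, `f(A) = [[4i/5, 3/5],[3/5, 4i/5]]` and
`‖f(A)‖₁ = 7/5 > 1`. -/
theorem vonNeumann_fails_for_one_norm :
    let A : Matrix (Fin 2) (Fin 2) ℂ := !![0, 1; 1, 0]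
    let a : ℂ := I / 2
    let fA : Matrix (Fin 2) (Fin 2) ℂ :=
      (A + a • (1 : Matrix (Fin 2) (Fin 2) ℂ)) *
        ((1 : Matrix (Fin 2) (Fin 2) ℂ) + (starRingEnd ℂ a) • A)⁻¹
    norm1 A = 1 ∧
    IsGreatest ((fun z : ℂ => ‖(z + a) / (1 + (starRingEnd ℂ a) * z)‖) ''
      {z : ℂ | ‖z‖ ≤ 1}) 1 ∧
    fA = !![4 * I / 5, 3 / 5; 3 / 5, 4 * I / 5] ∧
    norm1 fA = 7 / 5 ∧ (1 : ℝ) < 7 / 5 := by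
  intro A a fA
  have ha : (starRingEnd ℂ) a = -(I / 2) := by
    rw [show a = I/2 from rfl, map_div₀, Complex.conj_I, map_ofNat]; ring
  have hfA : fA = !![4 * I / 5, 3 / 5; 3 / 5, 4 * I / 5] := by
    have hB : ((1 : Matrix (Fin 2) (Fin 2) ℂ) + (starRingEnd ℂ a) • A)⁻¹ =
        !![4/5, 2*I/5; 2*I/5, 4/5] := by
      apply inv_eq_right_inv
      ext i j
      fin_cases i <;> fin_cases j <;>
        simp [A, ha, Matrix.mul_apply, Fin.sum_univ_two, Matrix.one_apply] <;> ring_nf <;>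
        simp [Complex.I_sq] <;> ring
    show (A + a • (1 : Matrix (Fin 2) (Fin 2) ℂ)) * _ = _
    rw [hB]
    ext i j
    fin_cases i <;> fin_cases j <;>
      simp [A, a, Matrix.mul_apply, Fin.sum_univ_two, Matrix.one_apply] <;> ring_nf <;>
      simp [Complex.I_sq] <;> ring
  refine ⟨?_, ⟨?_, ?_⟩, hfA, ?_, by norm_num⟩
  · simp [norm1, A]
  · refine ⟨1, by simp, ?_⟩
    have h1 : (1 : ℂ) + (starRingEnd ℂ a) * 1 = (starRingEnd ℂ) (1 + a) := by
      simp [ha, show a = I/2 from rfl]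
    simp only [h1]
    rw [norm_div, Complex.norm_conj]
    apply div_self
    simp only [ne_eq, norm_eq_zero]
    intro h
    have := congrArg Complex.im h
    simp [show a = I/2 from rfl] at this
  · rintro x ⟨z, hz, rfl⟩
    simp only [Set.mem_setOf_eq] at hz
    show ‖(z + a) / (1 + (starRingEnd ℂ a) * z)‖ ≤ 1
    by_cases hd : (1 : ℂ) + (starRingEnd ℂ a) * z = 0
    · rw [hd]; simp
    · rw [norm_div, div_le_one (norm_pos_iff.mpr hd), Complex.norm_def, Complex.norm_def]
      apply Real.sqrt_le_sqrt
      have hz2 : z.re ^ 2 + z.im ^ 2 ≤ 1 := by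
        have := Complex.sq_norm z
        rw [Complex.normSq_apply] at this
        nlinarith [norm_nonneg z]
      simp only [ha, show a = I/2 from rfl, Complex.normSq_apply, Complex.add_re,
        Complex.add_im, Complex.mul_re, Complex.mul_im, Complex.one_re, Complex.one_im,
        Complex.neg_re, Complex.neg_im, Complex.I_re, Complex.I_im, Complex.div_re,
        Complex.div_im, Complex.normSq_ofNat, Complex.re_ofNat, Complex.im_ofNat,
        Complex.conj_re, Complex.conj_im]
      nlinarith
  · rw [hfA]
    simp [norm1, map_div₀, Complex.norm_ofNat]
    norm_num
end

section
/- Schwarz–Pick via von Neumann: Let p be a polynomial with sup_{|z|≤1}|p(z)| ≤ 1, and let a, c ∈ ℂ with |a| < 1, |c| < 1, a ≠ c, and b ∈ ℂ with |b|² = (1-|a|²)(1-|c|²). Then the 2×2 matrix A = [[a, b],[0, c]] satisfies ‖A‖ = 1 (operator 2-norm), p(A) = [[p(a), b·(p(a)-p(c))/(a-c)],[0, p(c)]], and the inequality ‖p(A)‖ ≤ 1 implies |(p(a)-p(c))/(a-c)|² ≤ ((1-|p(a)|²)/(1-|a|²))·((1-|p(c)|²)/(1-|c|²)). -/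
open Complex Matrix Polynomial
open scoped Matrix.Norms.L2Operator ComplexConjugate

/-!
For `M = !![α, β; 0, γ]`, the defect `‖x‖² - ‖M x‖²` is a Hermitian form in `x` with diagonal
`1 - ‖α‖²`, `1 - ‖β‖² - ‖γ‖²` and off-diagonal entries of modulus `‖α‖ ‖β‖`; its determinant is
`(1 - ‖α‖²)(1 - ‖γ‖²) - ‖β‖²`. Hence `‖M‖ ≤ 1` iff `‖α‖, ‖γ‖ ≤ 1` and
`‖β‖² ≤ (1 - ‖α‖²)(1 - ‖γ‖²)`. For `A` the determinant vanishes, so the form has a nonzero null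
vector and `‖A‖ = 1`. The corner entry of `p(A)` is `b` times the divided difference of `p` at
`a, c`, so the criterion applied to `p(A)`, divided by `‖b‖² = (1 - ‖a‖²)(1 - ‖c‖²)`, is the
Schwarz–Pick estimate.
-/

theorem two_mul_mul_le_of_sq_le_mul {P R B : ℝ} (hP : 0 ≤ P) (hR : 0 ≤ R) (h : B ^ 2 ≤ P * R)
    (s t : ℝ) : 2 * B * s * t ≤ P * s ^ 2 + R * t ^ 2 := by
  rcases hP.eq_or_lt with rfl | hP
  · obtain rfl : B = 0 := by nlinarith
    nlinarith
  · nlinarith [sq_nonneg (P * s - B * t), mul_nonneg (sub_nonneg.2 h) (sq_nonneg t)]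

theorem hermitian_form_nonneg_iff (P R : ℝ) (w : ℂ) :
    (∀ x y : ℂ, 0 ≤ P * ‖x‖ ^ 2 - 2 * (w * x * conj y).re + R * ‖y‖ ^ 2) ↔
      0 ≤ P ∧ 0 ≤ R ∧ ‖w‖ ^ 2 ≤ P * R := by
  constructor
  · intro h
    have hP : 0 ≤ P := by simpa using h 1 0
    have hR : 0 ≤ R := by simpa using h 0 1
    have hdisc : discrim R (-2 * ‖w‖ ^ 2) (P * ‖w‖ ^ 2) ≤ 0 := by
      refine discrim_le_zero fun s => ?_
      have hws : (w * conj w * conj (s : ℂ)).re = ‖w‖ ^ 2 * s := by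
        rw [mul_conj', conj_ofReal]
        norm_cast
      have := h (conj w) s
      rw [hws, norm_conj, norm_real, Real.norm_eq_abs, sq_abs] at this
      linarith
    refine ⟨hP, hR, ?_⟩
    unfold discrim at hdisc
    nlinarith [mul_nonneg hP hR, sq_nonneg (‖w‖ ^ 2 - P * R)]
  · rintro ⟨hP, hR, hw⟩ x y
    have hre : (w * x * conj y).re ≤ ‖w‖ * ‖x‖ * ‖y‖ := by
      simpa using re_le_norm (w * x * conj y)
    linarith [two_mul_mul_le_of_sq_le_mul hP hR hw ‖x‖ ‖y‖]

namespace Matrix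

theorem l2_opNorm_le_one_iff {𝕜 m n : Type*} [RCLike 𝕜] [Fintype m] [Fintype n]
    [DecidableEq n] (M : Matrix m n 𝕜) :
    ‖M‖ ≤ 1 ↔ ∀ x : EuclideanSpace 𝕜 n, ‖WithLp.toLp 2 (M *ᵥ x.ofLp)‖ ≤ ‖x‖ := by
  simp only [l2_opNorm_def, ContinuousLinearMap.opNorm_le_iff zero_le_one, one_mul]
  rfl

theorem one_le_l2_opNorm_of_norm_mulVec_eq {𝕜 m n : Type*} [RCLike 𝕜] [Fintype m]
    [Fintype n] [DecidableEq n] (M : Matrix m n 𝕜) {x : EuclideanSpace 𝕜 n} (hx : x ≠ 0)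
    (h : ‖WithLp.toLp 2 (M *ᵥ x.ofLp)‖ = ‖x‖) : 1 ≤ ‖M‖ := by
  have hle : ‖x‖ ≤ ‖M‖ * ‖x‖ := h ▸ M.l2_opNorm_mulVec x
  exact le_of_mul_le_mul_right (by simpa using hle) (norm_pos_iff.2 hx)

theorem norm_sq_sub_norm_sq_mulVec_upperTriangular (α β γ : ℂ) (x : EuclideanSpace ℂ (Fin 2)) :
    ‖x‖ ^ 2 - ‖WithLp.toLp 2 (!![α, β; 0, γ] *ᵥ x.ofLp)‖ ^ 2 =
      (1 - ‖α‖ ^ 2) * ‖x 0‖ ^ 2 - 2 * (α * conj β * x 0 * conj (x 1)).re +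
        (1 - ‖β‖ ^ 2 - ‖γ‖ ^ 2) * ‖x 1‖ ^ 2 := by
  have hcross : α * x 0 * conj (β * x 1) = α * conj β * x 0 * conj (x 1) := by
    rw [map_mul]
    ring
  simp only [EuclideanSpace.norm_sq_eq, Fin.sum_univ_two, mulVec_fin_two, of_apply, cons_val',
    cons_val_zero, cons_val_one, empty_val', cons_val_fin_one, zero_mul, zero_add,
    Complex.sq_norm, normSq_add, normSq_mul, hcross]
  ring

theorem l2_opNorm_upperTriangular_le_one_iff (α β γ : ℂ) :
    ‖!![α, β; 0, γ]‖ ≤ 1 ↔ ‖α‖ ≤ 1 ∧ ‖γ‖ ≤ 1 ∧ ‖β‖ ^ 2 ≤ (1 - ‖α‖ ^ 2) * (1 - ‖γ‖ ^ 2) := by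
  have hform : (∀ x : EuclideanSpace ℂ (Fin 2),
      ‖WithLp.toLp 2 (!![α, β; 0, γ] *ᵥ x.ofLp)‖ ≤ ‖x‖) ↔
      ∀ x y : ℂ, 0 ≤ (1 - ‖α‖ ^ 2) * ‖x‖ ^ 2 - 2 * (α * conj β * x * conj y).re +
        (1 - ‖β‖ ^ 2 - ‖γ‖ ^ 2) * ‖y‖ ^ 2 := by
    have key (x : EuclideanSpace ℂ (Fin 2)) :
        ‖WithLp.toLp 2 (!![α, β; 0, γ] *ᵥ x.ofLp)‖ ≤ ‖x‖ ↔ 0 ≤ (1 - ‖α‖ ^ 2) * ‖x 0‖ ^ 2 -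
          2 * (α * conj β * x 0 * conj (x 1)).re + (1 - ‖β‖ ^ 2 - ‖γ‖ ^ 2) * ‖x 1‖ ^ 2 := by
      rw [← norm_sq_sub_norm_sq_mulVec_upperTriangular, sub_nonneg,
        sq_le_sq₀ (norm_nonneg _) (norm_nonneg _)]
    exact ⟨fun h x y => by simpa using (key !₂[x, y]).1 (h _), fun h x => (key x).2 (h _ _)⟩
  rw [l2_opNorm_le_one_iff, hform, hermitian_form_nonneg_iff, norm_mul, norm_conj]
  have := norm_nonneg α
  have := norm_nonneg β
  have := norm_nonneg γ
  constructor
  · rintro ⟨hP, hR, hw⟩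
    refine ⟨?_, ?_, by nlinarith⟩ <;> nlinarith
  · rintro ⟨hα, hγ, hβ⟩
    refine ⟨by nlinarith, ?_, by nlinarith⟩
    nlinarith [mul_nonneg (sq_nonneg ‖α‖) (sub_nonneg.2 (pow_le_one₀ (n := 2) (norm_nonneg γ) hγ))]

theorem one_le_l2_opNorm_upperTriangular {α β γ : ℂ} (hα : ‖α‖ < 1)
    (h : ‖β‖ ^ 2 = (1 - ‖α‖ ^ 2) * (1 - ‖γ‖ ^ 2)) : 1 ≤ ‖!![α, β; 0, γ]‖ := by
  set P : ℝ := 1 - ‖α‖ ^ 2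
  have hP : 0 < P := by nlinarith [norm_nonneg α]
  -- a null vector of the Hermitian form: its value there is `P * (P * (1 - ‖γ‖²) - ‖β‖²) = 0`
  have hx : !₂[conj α * β, (P : ℂ)] ≠ 0 := fun h0 => by
    simpa [hP.ne'] using congrArg (fun v : EuclideanSpace ℂ (Fin 2) => v 1) h0
  refine one_le_l2_opNorm_of_norm_mulVec_eq _ hx ?_
  have hdefect := norm_sq_sub_norm_sq_mulVec_upperTriangular α β γ !₂[conj α * β, (P : ℂ)]
  have hcross : (α * conj β * (conj α * β) * conj (P : ℂ)).re = ‖α‖ ^ 2 * ‖β‖ ^ 2 * P := by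
    rw [conj_ofReal, show α * conj β * (conj α * β) = α * conj α * (β * conj β) by ring,
      mul_conj', mul_conj']
    norm_cast
  rw [show (!₂[conj α * β, (P : ℂ)] : EuclideanSpace ℂ (Fin 2)) 0 = conj α * β from rfl,
    show (!₂[conj α * β, (P : ℂ)] : EuclideanSpace ℂ (Fin 2)) 1 = P from rfl, hcross,
    norm_mul, norm_conj, norm_real, Real.norm_eq_abs, sq_abs] at hdefect
  refine (sq_eq_sq₀ (norm_nonneg _) (norm_nonneg _)).1 ?_
  linear_combination (-1 : ℝ) * hdefect + P * h

theorem l2_opNorm_upperTriangular_eq_one {α β γ : ℂ} (hα : ‖α‖ < 1) (hγ : ‖γ‖ ≤ 1)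
    (h : ‖β‖ ^ 2 = (1 - ‖α‖ ^ 2) * (1 - ‖γ‖ ^ 2)) : ‖!![α, β; 0, γ]‖ = 1 :=
  le_antisymm ((l2_opNorm_upperTriangular_le_one_iff α β γ).2 ⟨hα.le, hγ, h.le⟩)
    (one_le_l2_opNorm_upperTriangular hα h)

theorem aeval_upperTriangular_fin_two {K : Type*} [Field K] {a c : K} (hac : a ≠ c)
    (b : K) (p : K[X]) :
    aeval !![a, b; 0, c] p = !![p.eval a, b * (p.eval a - p.eval c) / (a - c); 0, p.eval c] := by
  have hac' : a - c ≠ 0 := sub_ne_zero.2 hac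
  induction p using Polynomial.induction_on with
  | C k =>
    rw [aeval_C, algebraMap_eq_diagonal, Pi.algebraMap_def]
    ext i j
    fin_cases i <;> fin_cases j <;> simp
  | add p q hp hq =>
    rw [map_add, hp, hq]
    ext i j
    fin_cases i <;> fin_cases j <;> simp
    ring
  | monomial n k ih =>
    rw [pow_succ, ← mul_assoc, map_mul, ih, aeval_X, mul_fin_two]
    ext i j
    fin_cases i <;> fin_cases j <;> simp
    field_simp
    ring

end Matrix

theorem schwarz_pick_via_vonNeumann_general (p : Polynomial ℂ)
    (a b c : ℂ) (ha : ‖a‖ < 1) (hc : ‖c‖ < 1) (hac : a ≠ c)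
    (hb : ‖b‖ ^ 2 = (1 - ‖a‖ ^ 2) * (1 - ‖c‖ ^ 2)) :
    let A : Matrix (Fin 2) (Fin 2) ℂ := !![a, b; 0, c]
    ‖A‖ = 1 ∧
    Polynomial.aeval A p =
      !![p.eval a, b * (p.eval a - p.eval c) / (a - c); 0, p.eval c] ∧
    (‖Polynomial.aeval A p‖ ≤ 1 →
      ‖(p.eval a - p.eval c) / (a - c)‖ ^ 2 ≤
        ((1 - ‖p.eval a‖ ^ 2) / (1 - ‖a‖ ^ 2)) *
          ((1 - ‖p.eval c‖ ^ 2) / (1 - ‖c‖ ^ 2))) := by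
  intro A
  have hformula := aeval_upperTriangular_fin_two hac b p
  refine ⟨l2_opNorm_upperTriangular_eq_one ha hc.le hb, hformula, fun hpA => ?_⟩
  rw [hformula] at hpA
  obtain ⟨-, -, hcorner⟩ := (l2_opNorm_upperTriangular_le_one_iff _ _ _).1 hpA
  rw [mul_div_assoc, norm_mul, mul_pow, hb] at hcorner
  have ha' : 0 < 1 - ‖a‖ ^ 2 := by nlinarith [norm_nonneg a]
  have hc' : 0 < 1 - ‖c‖ ^ 2 := by nlinarith [norm_nonneg c]
  rw [div_mul_div_comm, le_div_iff₀ (by positivity)]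
  linarith

/-- Schwarz–Pick via von Neumann: for a polynomial `p` bounded by `1` on the closed unit
disk and `A = [[a,b],[0,c]]` with `|a|,|c| < 1`, `a ≠ c`, `|b|² = (1-|a|²)(1-|c|²)`,
one has `‖A‖ = 1`, an explicit formula for `p(A)`, and the von Neumann inequality
`‖p(A)‖ ≤ 1` implies the Schwarz–Pick type estimate. -/
theorem schwarz_pick_via_vonNeumann (p : Polynomial ℂ)
    (hp : ∀ z : ℂ, ‖z‖ ≤ 1 → ‖p.eval z‖ ≤ 1)
    (a b c : ℂ) (ha : ‖a‖ < 1) (hc : ‖c‖ < 1) (hac : a ≠ c)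
    (hb : ‖b‖ ^ 2 = (1 - ‖a‖ ^ 2) * (1 - ‖c‖ ^ 2)) :
    let A : Matrix (Fin 2) (Fin 2) ℂ := !![a, b; 0, c]
    ‖A‖ = 1 ∧
    Polynomial.aeval A p =
      !![p.eval a, b * (p.eval a - p.eval c) / (a - c); 0, p.eval c] ∧
    (‖Polynomial.aeval A p‖ ≤ 1 →
      ‖(p.eval a - p.eval c) / (a - c)‖ ^ 2 ≤
        ((1 - ‖p.eval a‖ ^ 2) / (1 - ‖a‖ ^ 2)) *
          ((1 - ‖p.eval c‖ ^ 2) / (1 - ‖c‖ ^ 2))) :=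
  schwarz_pick_via_vonNeumann_general p a b c ha hc hac hb
end

section
/- Counterexample to the three-variable von Neumann inequality with nilpotent shifts: Let e₁,…,e₈ be the standard basis of ℂ⁸ and define commuting contractions A₁, A₂, A₃ on ℂ⁸ by A₁: e₁↦e₂↦−e₅↦−e₈↦0, e₃↦e₇↦0, e₄↦e₆↦0; A₂: e₁↦e₃↦−e₆↦−e₈↦0, e₂↦e₇↦0, e₄↦e₅↦0; A₃: e₁↦e₄↦−e₇↦−e₈↦0, e₂↦e₆↦0, e₃↦e₅↦0 (all other basis vectors map to 0). Then A₁,A₂,A₃ pairwise commute, each ‖Aᵢ‖ ≤ 1, and for p(z₁,z₂,z₃) = z₁z₂z₃ − z₁³ − z₂³ − z₃³ one has ‖p(A₁,A₂,A₃)‖ ≥ 4 > sup_{|z₁|=|z₂|=|z₃|=1} |p(z₁,z₂,z₃)|. -/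
open Matrix
open scoped Matrix.Norms.L2Operator

/-!
Each `CDᵢ` is a signed partial permutation of the standard basis, so `CDᵢᴴ * CDᵢ` is a projection
and `CDᵢ` is a contraction. Multiplying out, `p(CD₁, CD₂, CD₃)` sends `e₁` to `4 • e₈`. On the torus,
`|p| = 4` would force, by strict convexity of the disc, `z₁³ = z₂³ = z₃³ = -z₁z₂z₃`; but then
`(z₁z₂z₃)³ = z₁³z₂³z₃³ = -(z₁z₂z₃)³`, impossible when `|z₁z₂z₃| = 1`.
-/

/-- The nilpotent shift `A₁` of the Crabb–Davie example: `e₁↦e₂↦−e₅↦−e₈↦0`,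
`e₃↦e₇↦0`, `e₄↦e₆↦0` (0-indexed entries: column `j` is the image of `e_{j+1}`). -/
noncomputable def CD₁ : Matrix (Fin 8) (Fin 8) ℂ :=
  single 1 0 1 - single 4 1 1 + single 7 4 1 +
    single 6 2 1 + single 5 3 1

/-- `A₂`: `e₁↦e₃↦−e₆↦−e₈↦0`, `e₂↦e₇↦0`, `e₄↦e₅↦0`. -/
noncomputable def CD₂ : Matrix (Fin 8) (Fin 8) ℂ :=
  single 2 0 1 - single 5 2 1 + single 7 5 1 +
    single 6 1 1 + single 4 3 1

/-- `A₃`: `e₁↦e₄↦−e₇↦−e₈↦0`, `e₂↦e₆↦0`, `e₃↦e₅↦0`. -/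
noncomputable def CD₃ : Matrix (Fin 8) (Fin 8) ℂ :=
  single 3 0 1 - single 6 3 1 + single 7 6 1 +
    single 5 1 1 + single 4 2 1

theorem norm_le_one_of_isIdempotentElem_star_mul_self {E : Type*} [NonUnitalNormedRing E]
    [StarRing E] [CStarRing E] {x : E} (hx : IsIdempotentElem (star x * x)) : ‖x‖ ≤ 1 := by
  have h := IsStarProjection.norm_le _ ⟨hx, .star_mul_self x⟩
  rw [CStarRing.norm_star_mul_self] at h
  nlinarith [norm_nonneg x]

theorem Matrix.norm_entry_le_l2_opNorm {m n 𝕜 : Type*} [Fintype m] [Fintype n] [DecidableEq n]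
    [RCLike 𝕜] (A : Matrix m n 𝕜) (i : m) (j : n) : ‖A i j‖ ≤ ‖A‖ := by
  calc ‖A i j‖ = ‖((EuclideanSpace.equiv m 𝕜).symm (A *ᵥ EuclideanSpace.single j 1)) i‖ := by
        simp
    _ ≤ ‖(EuclideanSpace.equiv m 𝕜).symm (A *ᵥ EuclideanSpace.single j 1)‖ :=
        PiLp.norm_apply_le _ i
    _ ≤ ‖A‖ * ‖EuclideanSpace.single j (1 : 𝕜)‖ := A.l2_opNorm_mulVec _
    _ = ‖A‖ := by simp

theorem neg_eq_of_four_le_norm_sub_sub_sub {E : Type*} [NormedAddCommGroup E] [NormedSpace ℝ E]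
    [StrictConvexSpace ℝ E] {w a b c : E} (hw : ‖w‖ = 1) (ha : ‖a‖ = 1) (hb : ‖b‖ = 1)
    (hc : ‖c‖ = 1) (h : 4 ≤ ‖w - a - b - c‖) : -a = w := by
  have hwa : ‖w - a‖ ≤ 2 := (norm_sub_le w a).trans (by rw [hw, ha]; norm_num)
  have hbc : ‖b + c‖ ≤ 2 := (norm_add_le b c).trans (by rw [hb, hc]; norm_num)
  have hsplit : ‖w - a - b - c‖ ≤ ‖w - a‖ + ‖b + c‖ := by
    rw [sub_sub (w - a)]
    exact norm_sub_le _ _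
  refine eq_of_norm_eq_of_norm_add_eq (by rw [norm_neg, ha, hw]) ?_
  rw [neg_add_eq_sub, norm_neg, ha, hw]
  linarith

theorem norm_mul_mul_sub_cubes_lt_four {z₁ z₂ z₃ : ℂ} (h₁ : ‖z₁‖ = 1) (h₂ : ‖z₂‖ = 1)
    (h₃ : ‖z₃‖ = 1) : ‖z₁ * z₂ * z₃ - z₁ ^ 3 - z₂ ^ 3 - z₃ ^ 3‖ < 4 := by
  by_contra! h
  have hw : ‖z₁ * z₂ * z₃‖ = 1 := by simp [h₁, h₂, h₃]
  have hcube : ∀ z : ℂ, ‖z‖ = 1 → ‖z ^ 3‖ = 1 := fun z hz => by simp [hz]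
  have e₁ : -z₁ ^ 3 = z₁ * z₂ * z₃ :=
    neg_eq_of_four_le_norm_sub_sub_sub hw (hcube _ h₁) (hcube _ h₂) (hcube _ h₃) h
  have e₂ : -z₂ ^ 3 = z₁ * z₂ * z₃ :=
    neg_eq_of_four_le_norm_sub_sub_sub hw (hcube _ h₂) (hcube _ h₁) (hcube _ h₃)
      (by rwa [sub_right_comm (z₁ * z₂ * z₃)])
  have e₃ : -z₃ ^ 3 = z₁ * z₂ * z₃ :=
    neg_eq_of_four_le_norm_sub_sub_sub hw (hcube _ h₃) (hcube _ h₁) (hcube _ h₂)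
      (by rwa [sub_right_comm (z₁ * z₂ * z₃), sub_right_comm (z₁ * z₂ * z₃ - _)])
  have hneg : (z₁ * z₂ * z₃) ^ 3 = -(z₁ * z₂ * z₃) ^ 3 :=
    calc (z₁ * z₂ * z₃) ^ 3 = -((-z₁ ^ 3) * (-z₂ ^ 3) * (-z₃ ^ 3)) := by ring
      _ = -(z₁ * z₂ * z₃) ^ 3 := by rw [e₁, e₂, e₃]; ring
  rw [self_eq_neg, pow_eq_zero_iff three_ne_zero] at hneg
  simp [hneg] at hw

theorem commute_CD₁_CD₂ : Commute CD₁ CD₂ := by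
  simp [Commute, SemiconjBy, CD₁, CD₂, add_mul, mul_add, sub_mul, mul_sub, single_mul_single_of_ne]

theorem commute_CD₁_CD₃ : Commute CD₁ CD₃ := by
  simp [Commute, SemiconjBy, CD₁, CD₃, add_mul, mul_add, sub_mul, mul_sub, single_mul_single_of_ne]

theorem commute_CD₂_CD₃ : Commute CD₂ CD₃ := by
  simp [Commute, SemiconjBy, CD₂, CD₃, add_mul, mul_add, sub_mul, mul_sub, single_mul_single_of_ne]

theorem norm_CD₁_le_one : ‖CD₁‖ ≤ 1 :=
  norm_le_one_of_isIdempotentElem_star_mul_self <| by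
    simp [IsIdempotentElem, CD₁, star_eq_conjTranspose, add_mul, mul_add, sub_mul, mul_sub,
      single_mul_single_of_ne]

theorem norm_CD₂_le_one : ‖CD₂‖ ≤ 1 :=
  norm_le_one_of_isIdempotentElem_star_mul_self <| by
    simp [IsIdempotentElem, CD₂, star_eq_conjTranspose, add_mul, mul_add, sub_mul, mul_sub,
      single_mul_single_of_ne]

theorem norm_CD₃_le_one : ‖CD₃‖ ≤ 1 :=
  norm_le_one_of_isIdempotentElem_star_mul_self <| by
    simp [IsIdempotentElem, CD₃, star_eq_conjTranspose, add_mul, mul_add, sub_mul, mul_sub,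
      single_mul_single_of_ne]

theorem CD_cubic_eq_single :
    CD₁ * CD₂ * CD₃ - CD₁ ^ 3 - CD₂ ^ 3 - CD₃ ^ 3 = single 7 0 4 := by
  simp only [CD₁, CD₂, CD₃, pow_succ, pow_zero, one_mul, add_mul, mul_add, sub_mul, mul_sub,
    single_mul_single_same]
  simp [single_mul_single_of_ne, ← single_add]
  norm_num

/-- The Crabb–Davie counterexample to the three-variable von Neumann inequality:
`A₁, A₂, A₃` are commuting contractions on `ℂ⁸` and for
`p(z₁,z₂,z₃) = z₁z₂z₃ − z₁³ − z₂³ − z₃³` one has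
`‖p(A₁,A₂,A₃)‖ ≥ 4 > sup_{𝕋³} |p|`. -/
theorem crabb_davie_counterexample :
    (CD₁ * CD₂ = CD₂ * CD₁ ∧ CD₁ * CD₃ = CD₃ * CD₁ ∧ CD₂ * CD₃ = CD₃ * CD₂) ∧
    (‖CD₁‖ ≤ 1 ∧ ‖CD₂‖ ≤ 1 ∧ ‖CD₃‖ ≤ 1) ∧
    (4 : ℝ) ≤ ‖CD₁ * CD₂ * CD₃ - CD₁ ^ 3 - CD₂ ^ 3 - CD₃ ^ 3‖ ∧
    (∀ z₁ z₂ z₃ : ℂ, ‖z₁‖ = 1 → ‖z₂‖ = 1 → ‖z₃‖ = 1 →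
      ‖z₁ * z₂ * z₃ - z₁ ^ 3 - z₂ ^ 3 - z₃ ^ 3‖ < 4) := by
  refine ⟨⟨commute_CD₁_CD₂.eq, commute_CD₁_CD₃.eq, commute_CD₂_CD₃.eq⟩,
    ⟨norm_CD₁_le_one, norm_CD₂_le_one, norm_CD₃_le_one⟩, ?_,
    fun _ _ _ ↦ norm_mul_mul_sub_cubes_lt_four⟩
  simpa [CD_cubic_eq_single] using
    (single (7 : Fin 8) (0 : Fin 8) (4 : ℂ)).norm_entry_le_l2_opNorm 7 0
end

section
/- Let A be a 2×2 complex matrix A = [[1, ρ − 1/ρ],[0, −1]] with ρ > 1. Then A = L B L^{-1} where B = diag(1, −1), L = [[1, −(ρ−1/ρ)/(ρ+1/ρ)],[0, 2/(ρ+1/ρ)]], and ‖L‖·‖L^{-1}‖ = ‖A‖ = ρ (operator 2-norm). Consequently, for any function f defined at ±1, ‖f(A)‖ ≤ ρ·max(|f(1)|, |f(−1)|). -/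
/-!
Put `c = ρ - 1/ρ` and `s = ρ + 1/ρ`. Then `L⁻¹ = [[1, c/2], [0, s/2]]`, and `A = L B L⁻¹` is a
direct computation. For an upper triangular `M = [[a, b], [0, d]]`, the bound `‖M‖ ≤ γ` follows
from positive semidefiniteness of `γ² - MᴴM`, i.e. from three scalar inequalities; these give
`‖L‖ ≤ √(2ρ²/(ρ²+1))` and `‖L⁻¹‖ ≤ √((ρ²+1)/2)`, so `‖L‖ ‖L⁻¹‖ ≤ ρ`. Conversely
`A (1/ρ, 1) = (ρ, -1)` gives `ρ ≤ ‖A‖`, while `‖A‖ = ‖L B L⁻¹‖ ≤ ‖L‖ ‖L⁻¹‖` because `‖B‖ = 1`.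
This pins both `‖A‖` and `‖L‖ ‖L⁻¹‖` to `ρ`, and the last claim is submultiplicativity together
with `‖diag(a, b)‖ = max ‖a‖ ‖b‖`.
-/

open Matrix
open scoped Matrix.Norms.L2Operator

theorem two_mul_mul_le_of_sq_le_mul_s18 {α : Type*} [CommRing α] [LinearOrder α]
    [IsStrictOrderedRing α] {P Q k : α} (hP : 0 ≤ P) (hQ : 0 ≤ Q) (hk : k ^ 2 ≤ P * Q)
    (s t : α) : 2 * k * s * t ≤ P * s ^ 2 + Q * t ^ 2 := by
  refine (abs_le_of_sq_le_sq' ?_ (by positivity)).2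
  nlinarith [sq_nonneg (P * s ^ 2 - Q * t ^ 2), mul_le_mul_of_nonneg_right hk (sq_nonneg (s * t))]

namespace Matrix

variable {𝕜 : Type*} [RCLike 𝕜]

theorem l2_opNorm_upperTriangular_fin_two_le {a b d : 𝕜} {c : ℝ} (hc : 0 ≤ c)
    (ha : ‖a‖ ^ 2 ≤ c ^ 2) (hbd : ‖b‖ ^ 2 + ‖d‖ ^ 2 ≤ c ^ 2)
    (hdet : (‖a‖ * ‖b‖) ^ 2 ≤ (c ^ 2 - ‖a‖ ^ 2) * (c ^ 2 - ‖b‖ ^ 2 - ‖d‖ ^ 2)) :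
    ‖!![a, b; 0, d]‖ ≤ c := by
  rw [cstar_norm_def]
  refine ContinuousLinearMap.opNorm_le_bound _ hc fun x =>
    (sq_le_sq₀ (norm_nonneg _) (by positivity)).mp ?_
  have htri : ‖a * x 0 + b * x 1‖ ≤ ‖a‖ * ‖x 0‖ + ‖b‖ * ‖x 1‖ :=
    (norm_add_le _ _).trans_eq (by rw [norm_mul, norm_mul])
  have hcross := two_mul_mul_le_of_sq_le_mul_s18 (sub_nonneg.2 ha) (by linarith) hdet ‖x 0‖ ‖x 1‖
  simp only [EuclideanSpace.norm_sq_eq, mul_pow, Fin.sum_univ_two, ofLp_toEuclideanCLM, mulVec,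
    dotProduct, of_apply, cons_val', cons_val_zero, cons_val_one, empty_val', cons_val_fin_one,
    zero_mul, zero_add, norm_mul]
  nlinarith [pow_le_pow_left₀ (norm_nonneg _) htri 2]

theorem l2_opNorm_upperTriangular_fin_two_ofReal_le {a b d c : ℝ} (hc : 0 ≤ c)
    (ha : a ^ 2 ≤ c ^ 2) (hbd : b ^ 2 + d ^ 2 ≤ c ^ 2)
    (hdet : (a * b) ^ 2 ≤ (c ^ 2 - a ^ 2) * (c ^ 2 - b ^ 2 - d ^ 2)) :
    ‖!![(a : 𝕜), b; 0, d]‖ ≤ c := by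
  refine l2_opNorm_upperTriangular_fin_two_le hc ?_ ?_ ?_ <;>
    simpa only [RCLike.norm_ofReal, sq_abs, ← abs_mul]

theorem l2_opNorm_diagonal_fin_two (x y : 𝕜) : ‖!![x, 0; 0, y]‖ = max ‖x‖ ‖y‖ := by
  simp [← diagonal_vec2, Pi.norm_def, Fin.univ_succ]

variable {K : Type*} [Field K] [NeZero (2 : K)] {c s : K}

theorem inv_upperTriangular_fin_two (hs : s ≠ 0) :
    !![1, -(c / s); 0, 2 / s]⁻¹ = !![1, c / 2; 0, s / 2] := by
  refine inv_eq_right_inv ?_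
  ext i j
  fin_cases i <;> fin_cases j <;> simp [field]

theorem upperTriangular_fin_two_eq_conj_diagonal (hs : s ≠ 0) :
    !![1, c; 0, -1] = !![1, -(c / s); 0, 2 / s] * !![1, 0; 0, -1] * !![1, c / 2; 0, s / 2] := by
  ext i j
  fin_cases i <;> fin_cases j <;> simp [field, one_add_one_eq_two]

end Matrix

section

variable {ρ : ℝ}

theorem le_l2_opNorm_reflection (hρ : 0 < ρ) : ρ ≤ ‖!![(1 : ℂ), ρ - 1 / ρ; 0, -1]‖ := by
  set x : EuclideanSpace ℂ (Fin 2) := !₂[1 / ρ, 1]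
  have hx : 0 < ‖x‖ := norm_pos_iff.2 fun h => by simpa [x] using congr(WithLp.ofLp $h 1)
  have hAx : ρ * ‖x‖ ≤ ‖toEuclideanCLM (n := Fin 2) (𝕜 := ℂ) !![(1 : ℂ), ρ - 1 / ρ; 0, -1] x‖ := by
    refine (sq_le_sq₀ (by positivity) (norm_nonneg _)).mp (le_of_eq ?_)
    simp [mul_pow, EuclideanSpace.norm_sq_eq, Fin.sum_univ_two, x]
    field_simp
    ring
  exact le_of_mul_le_mul_right (hAx.trans (ContinuousLinearMap.le_opNorm _ _)) hx

theorem l2_opNorm_reflection_diagonalizer_le (hρ : 1 ≤ ρ) :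
    ‖!![(1 : ℂ), -((ρ - 1 / ρ) / (ρ + 1 / ρ)); 0, 2 / (ρ + 1 / ρ)]‖ ≤
      √(2 * ρ ^ 2 / (ρ ^ 2 + 1)) := by
  have hρ0 : 0 < ρ := by linarith
  have h := l2_opNorm_upperTriangular_fin_two_ofReal_le (𝕜 := ℂ) (a := 1)
    (b := -((ρ - 1 / ρ) / (ρ + 1 / ρ))) (d := 2 / (ρ + 1 / ρ)) (c := √(2 * ρ ^ 2 / (ρ ^ 2 + 1)))
    (Real.sqrt_nonneg _) ?_ ?_ ?_
  · push_cast at h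
    exact h
  all_goals rw [Real.sq_sqrt (by positivity)]
  · rw [le_div_iff₀ (by positivity)]
    nlinarith
  · field_simp
    nlinarith
  · field_simp
    nlinarith

theorem l2_opNorm_reflection_diagonalizer_inv_le (hρ : 1 ≤ ρ) :
    ‖!![(1 : ℂ), -((ρ - 1 / ρ) / (ρ + 1 / ρ)); 0, 2 / (ρ + 1 / ρ)]⁻¹‖ ≤ √((ρ ^ 2 + 1) / 2) := by
  have hρ0 : 0 < ρ := by linarith
  rw [inv_upperTriangular_fin_two (by norm_cast; positivity)]
  have h := l2_opNorm_upperTriangular_fin_two_ofReal_le (𝕜 := ℂ) (a := 1) (b := (ρ - 1 / ρ) / 2)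
    (d := (ρ + 1 / ρ) / 2) (c := √((ρ ^ 2 + 1) / 2)) (Real.sqrt_nonneg _) ?_ ?_ ?_
  · push_cast at h
    exact h
  all_goals rw [Real.sq_sqrt (by positivity)]
  · nlinarith
  · field_simp
    nlinarith
  · field_simp
    nlinarith

end

/-- For `ρ > 1` and `A = [[1, ρ-1/ρ],[0,-1]]` one has `A = L B L⁻¹` with `B = diag(1,-1)`,
`L = [[1, -(ρ-1/ρ)/(ρ+1/ρ)],[0, 2/(ρ+1/ρ)]]`, and `‖L‖·‖L⁻¹‖ = ‖A‖ = ρ`; consequently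
for any function `f` defined at `±1`, `‖f(A)‖ = ‖L·diag(f(1),f(-1))·L⁻¹‖ ≤ ρ·max(|f(1)|,|f(-1)|)`. -/
theorem similarity_ellipse_example (ρ : ℝ) (hρ : 1 < ρ) :
    let A : Matrix (Fin 2) (Fin 2) ℂ := !![1, (ρ : ℂ) - 1 / ρ; 0, -1]
    let B : Matrix (Fin 2) (Fin 2) ℂ := !![1, 0; 0, -1]
    let L : Matrix (Fin 2) (Fin 2) ℂ :=
      !![1, -(((ρ : ℂ) - 1 / ρ) / ((ρ : ℂ) + 1 / ρ)); 0, 2 / ((ρ : ℂ) + 1 / ρ)]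
    A = L * B * L⁻¹ ∧
    ‖L‖ * ‖L⁻¹‖ = ρ ∧ ‖A‖ = ρ ∧
    (∀ f : ℂ → ℂ,
      ‖L * !![f 1, 0; 0, f (-1)] * L⁻¹‖ ≤ ρ * max ‖f 1‖ ‖f (-1)‖) := by
  intro A B L
  have hρ0 : 0 < ρ := by linarith
  have hs : (ρ : ℂ) + 1 / ρ ≠ 0 := by norm_cast; positivity
  have hAeq : A = L * B * L⁻¹ :=
    inv_upperTriangular_fin_two hs ▸ upperTriangular_fin_two_eq_conj_diagonal hs
  have hconj (D : Matrix (Fin 2) (Fin 2) ℂ) : ‖L * D * L⁻¹‖ ≤ ‖L‖ * ‖L⁻¹‖ * ‖D‖ :=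
    calc ‖L * D * L⁻¹‖ ≤ ‖L‖ * ‖D‖ * ‖L⁻¹‖ := by grw [l2_opNorm_mul, l2_opNorm_mul]
      _ = ‖L‖ * ‖L⁻¹‖ * ‖D‖ := by ring
  have hLL : ‖L‖ * ‖L⁻¹‖ ≤ ρ :=
    calc ‖L‖ * ‖L⁻¹‖ ≤ √(2 * ρ ^ 2 / (ρ ^ 2 + 1)) * √((ρ ^ 2 + 1) / 2) := by
          gcongr
          exacts [l2_opNorm_reflection_diagonalizer_le hρ.le,
            l2_opNorm_reflection_diagonalizer_inv_le hρ.le]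
      _ = ρ := by
          rw [← Real.sqrt_mul (by positivity),
            show 2 * ρ ^ 2 / (ρ ^ 2 + 1) * ((ρ ^ 2 + 1) / 2) = ρ ^ 2 by field_simp,
            Real.sqrt_sq hρ0.le]
  have hAL : ‖A‖ ≤ ‖L‖ * ‖L⁻¹‖ := by
    have hB : ‖B‖ = 1 := by simp [B, l2_opNorm_diagonal_fin_two]
    simpa [hB, ← hAeq] using hconj B
  have hρA : ρ ≤ ‖A‖ := le_l2_opNorm_reflection hρ0
  refine ⟨hAeq, by linarith, by linarith, fun f => ?_⟩
  calc _ ≤ ‖L‖ * ‖L⁻¹‖ * ‖!![f 1, 0; 0, f (-1)]‖ := hconj _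
    _ ≤ ρ * max ‖f 1‖ ‖f (-1)‖ := by rw [l2_opNorm_diagonal_fin_two]; gcongr
end
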